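/- arXiv:1911.02627 — 11 statements merged into one kernel-verified Lean document; each statement's English description precedes it below -/
import Mathlib

section
/- Let X be a set and let 𝒜, ℬ be collections of subsets of X. If 𝒜 is almost-Γ-like and ℬ is Γ-like, then α₂(𝒜,ℬ) holds if and only if Player I has no winning predetermined strategy in the selection game G₁(𝒜,ℬ). -/
open Set

/-- A collection `𝒜` of subsets of `X` is Γ-like if every member is infinite
and every infinite subset of a member is itself a member. -/
def GammaLike {X : Type*} (𝒜 : Set (Set X)) : Prop :=
  ∀ A ∈ 𝒜, A.Infinite ∧ ∀ A' ⊆ A, A'.Infinite → A' ∈ 𝒜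

/-- A collection `𝒜` is almost-Γ-like if each `A ∈ 𝒜` has a countably infinite
subset `A'` all of whose cofinite subsets belong to `𝒜`. -/
def AlmostGammaLike {X : Type*} (𝒜 : Set (Set X)) : Prop :=
  ∀ A ∈ 𝒜, ∃ A' ⊆ A, A'.Countable ∧ A'.Infinite ∧
    ∀ A'' ⊆ A', (A' \ A'').Finite → A'' ∈ 𝒜

/-- `𝒜` is closed under finite unions. -/
def UnionClosed {X : Type*} (𝒜 : Set (Set X)) : Prop :=
  ∀ A ∈ 𝒜, ∀ B ∈ 𝒜, A ∪ B ∈ 𝒜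

/-- α₁(𝒜,ℬ): for every sequence from 𝒜 there is `B ∈ ℬ` with `A n \ B` finite for all `n`. -/
def Alpha1 {X : Type*} (𝒜 ℬ : Set (Set X)) : Prop :=
  ∀ A : ℕ → Set X, (∀ n, A n ∈ 𝒜) → ∃ B ∈ ℬ, ∀ n, (A n \ B).Finite

/-- α₂(𝒜,ℬ): for every sequence from 𝒜 there is `B ∈ ℬ` meeting each `A n` infinitely. -/
def Alpha2 {X : Type*} (𝒜 ℬ : Set (Set X)) : Prop :=
  ∀ A : ℕ → Set X, (∀ n, A n ∈ 𝒜) → ∃ B ∈ ℬ, ∀ n, (A n ∩ B).Infinite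

/-- α₂'(𝒜,ℬ): for every sequence from 𝒜 there is `B ∈ ℬ` meeting each `A n`. -/
def Alpha2' {X : Type*} (𝒜 ℬ : Set (Set X)) : Prop :=
  ∀ A : ℕ → Set X, (∀ n, A n ∈ 𝒜) → ∃ B ∈ ℬ, ∀ n, (A n ∩ B).Nonempty

/-- α₃(𝒜,ℬ): for every sequence from 𝒜 there is `B ∈ ℬ` meeting infinitely many `A n` infinitely. -/
def Alpha3 {X : Type*} (𝒜 ℬ : Set (Set X)) : Prop :=
  ∀ A : ℕ → Set X, (∀ n, A n ∈ 𝒜) → ∃ B ∈ ℬ, {n | (A n ∩ B).Infinite}.Infinite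

/-- α₄(𝒜,ℬ): for every sequence from 𝒜 there is `B ∈ ℬ` meeting infinitely many `A n`. -/
def Alpha4 {X : Type*} (𝒜 ℬ : Set (Set X)) : Prop :=
  ∀ A : ℕ → Set X, (∀ n, A n ∈ 𝒜) → ∃ B ∈ ℬ, {n | (A n ∩ B).Nonempty}.Infinite

/-- α_{1.1}(𝒜,ℬ): α₁ restricted to pairwise disjoint sequences. -/
def Alpha1p1 {X : Type*} (𝒜 ℬ : Set (Set X)) : Prop :=
  ∀ A : ℕ → Set X, (∀ n, A n ∈ 𝒜) → (∀ m n, m ≠ n → Disjoint (A m) (A n)) →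
    ∃ B ∈ ℬ, ∀ n, (A n \ B).Finite

/-- α_{1.5}(𝒜,ℬ): for pairwise disjoint sequences from 𝒜 there is `B ∈ ℬ` with
`A n \ B` finite for infinitely many `n`. -/
def Alpha1p5 {X : Type*} (𝒜 ℬ : Set (Set X)) : Prop :=
  ∀ A : ℕ → Set X, (∀ n, A n ∈ 𝒜) → (∀ m n, m ≠ n → Disjoint (A m) (A n)) →
    ∃ B ∈ ℬ, {n | (A n \ B).Finite}.Infinite

/-- α_{2.1}(𝒜,ℬ): α₂ restricted to pairwise disjoint sequences. -/
def Alpha2p1 {X : Type*} (𝒜 ℬ : Set (Set X)) : Prop :=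
  ∀ A : ℕ → Set X, (∀ n, A n ∈ 𝒜) → (∀ m n, m ≠ n → Disjoint (A m) (A n)) →
    ∃ B ∈ ℬ, ∀ n, (A n ∩ B).Infinite

/-- α_{3.1}(𝒜,ℬ): α₃ restricted to pairwise disjoint sequences. -/
def Alpha3p1 {X : Type*} (𝒜 ℬ : Set (Set X)) : Prop :=
  ∀ A : ℕ → Set X, (∀ n, A n ∈ 𝒜) → (∀ m n, m ≠ n → Disjoint (A m) (A n)) →
    ∃ B ∈ ℬ, {n | (A n ∩ B).Infinite}.Infinite

/-- α_{4.1}(𝒜,ℬ): α₄ restricted to pairwise disjoint sequences. -/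
def Alpha4p1 {X : Type*} (𝒜 ℬ : Set (Set X)) : Prop :=
  ∀ A : ℕ → Set X, (∀ n, A n ∈ 𝒜) → (∀ m n, m ≠ n → Disjoint (A m) (A n)) →
    ∃ B ∈ ℬ, {n | (A n ∩ B).Nonempty}.Infinite

/-- Player I has a winning predetermined strategy in G₁(𝒜,ℬ). -/
def PredWinG1 {X : Type*} (𝒜 ℬ : Set (Set X)) : Prop :=
  ∃ A : ℕ → Set X, (∀ n, A n ∈ 𝒜) ∧
    ∀ a : ℕ → X, (∀ n, a n ∈ A n) → Set.range a ∉ ℬ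

/-- Player I has a winning predetermined strategy in G_fin(𝒜,ℬ). -/
def PredWinGfin {X : Type*} (𝒜 ℬ : Set (Set X)) : Prop :=
  ∃ A : ℕ → Set X, (∀ n, A n ∈ 𝒜) ∧
    ∀ F : ℕ → Set X, (∀ n, (F n).Finite ∧ F n ⊆ A n) → (⋃ n, F n) ∉ ℬ

/-- Player I has a winning predetermined strategy in G_{<2}(𝒜,ℬ),
where II picks at most one point each round. -/
def PredWinGlt2 {X : Type*} (𝒜 ℬ : Set (Set X)) : Prop :=
  ∃ A : ℕ → Set X, (∀ n, A n ∈ 𝒜) ∧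
    ∀ F : ℕ → Set X, (∀ n, (F n).Subsingleton ∧ F n ⊆ A n) → (⋃ n, F n) ∉ ℬ

/-- Player I has a winning predetermined strategy in G_cf(𝒜,ℬ),
where II picks a cofinite subset each round. -/
def PredWinGcf {X : Type*} (𝒜 ℬ : Set (Set X)) : Prop :=
  ∃ A : ℕ → Set X, (∀ n, A n ∈ 𝒜) ∧
    ∀ B : ℕ → Set X, (∀ n, B n ⊆ A n ∧ (A n \ B n).Finite) → (⋃ n, B n) ∉ ℬ

/-- Player I has a winning perfect-information strategy in G₁(𝒜,ℬ):
a function from finite sequences of points of X into 𝒜 defeating all counterplays. -/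
def WinG1 {X : Type*} (𝒜 ℬ : Set (Set X)) : Prop :=
  ∃ σ : List X → Set X, (∀ s, σ s ∈ 𝒜) ∧
    ∀ a : ℕ → X, (∀ n, a n ∈ σ (List.ofFn fun i : Fin n => a i)) → Set.range a ∉ ℬ

/-- Player I has a winning perfect-information strategy in G_fin(𝒜,ℬ):
a function from finite sequences of finite subsets of X into 𝒜 defeating all counterplays. -/
def WinGfin {X : Type*} (𝒜 ℬ : Set (Set X)) : Prop :=
  ∃ σ : List (Set X) → Set X, (∀ s : List (Set X), (∀ F ∈ s, F.Finite) → σ s ∈ 𝒜) ∧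
    ∀ F : ℕ → Set X,
      (∀ n, (F n).Finite ∧ F n ⊆ σ (List.ofFn fun i : Fin n => F i)) →
      (⋃ n, F n) ∉ ℬ

/-- Player I has a winning perfect-information strategy in G_{<2}(𝒜,ℬ):
a function from finite sequences of at-most-singleton subsets of X into 𝒜
defeating all counterplays. -/
def WinGlt2 {X : Type*} (𝒜 ℬ : Set (Set X)) : Prop :=
  ∃ σ : List (Set X) → Set X, (∀ s : List (Set X), (∀ F ∈ s, F.Subsingleton) → σ s ∈ 𝒜) ∧
    ∀ F : ℕ → Set X,
      (∀ n, (F n).Subsingleton ∧ F n ⊆ σ (List.ofFn fun i : Fin n => F i)) →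
      (⋃ n, F n) ∉ ℬ

/-! Forward direction: if `B ∈ ℬ` meets every move `A n` of a predetermined strategy in an
infinite set, II can answer with pairwise distinct points of `B`; they form an infinite subset of
`B`, which lies in `ℬ` because `ℬ` is Γ-like.

Converse: fix an enumeration `e n` of a countable core of `A n` as in almost-Γ-likeness, so every
tail `range (e n) \ e n '' Iio j` lies in `𝒜`. Player I plays in round `Nat.pair n j` the `j`-th
tail of `e n`. A play beating this strategy is a member of `ℬ` meeting every tail of every `e n`,
hence meeting each `A n` in an infinite set. -/

lemma exists_injective_forall_mem_of_infinite {X : Type*} {C : ℕ → Set X}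
    (hC : ∀ n, (C n).Infinite) : ∃ a : ℕ → X, Function.Injective a ∧ ∀ n, a n ∈ C n := by
  choose next next_mem next_notMem using fun n (s : Finset X) => (hC n).exists_notMem_finset s
  classical
  let chosen : ℕ → Finset X := fun n => Nat.rec ∅ (fun k s => insert (next k s) s) n
  have mem_chosen {m n : ℕ} (h : m < n) : next m (chosen m) ∈ chosen n := by
    induction n, h using Nat.le_induction with
    | base => exact Finset.mem_insert_self _ _
    | succ n _ ih => exact Finset.mem_insert_of_mem ih
  refine ⟨fun n => next n (chosen n), ?_, fun n => next_mem n _⟩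
  refine Function.injective_iff_pairwise_ne.2 (pairwise_iff_lt.2 fun m n h heq => ?_)
  replace heq : next m (chosen m) = next n (chosen n) := heq
  exact next_notMem n _ (heq ▸ mem_chosen h)

lemma infinite_of_forall_exists_notMem_image_Iio {X : Type*} {f : ℕ → X} {T : Set X}
    (hT : T ⊆ range f) (h : ∀ j, ∃ x ∈ T, x ∉ f '' Iio j) : T.Infinite := by
  intro hfin
  rw [← image_univ] at hT
  obtain ⟨t, -, ht, rfl⟩ := exists_subset_image_finite_and.1 ⟨T, hT, hfin, rfl⟩
  obtain ⟨J, hJ⟩ := ht.bddAbove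
  obtain ⟨-, ⟨i, hi, rfl⟩, hnot⟩ := h (J + 1)
  exact hnot (mem_image_of_mem f (Nat.lt_succ_of_le (hJ hi)))

lemma AlmostGammaLike.exists_seq_tails_mem {X : Type*} {𝒜 : Set (Set X)}
    (h𝒜 : AlmostGammaLike 𝒜) {A : Set X} (hA : A ∈ 𝒜) :
    ∃ e : ℕ → X, range e ⊆ A ∧ ∀ j, range e \ e '' Iio j ∈ 𝒜 := by
  obtain ⟨A', hA'A, hcount, hinf, hcofinite⟩ := h𝒜 A hA
  obtain ⟨e, rfl⟩ := hcount.exists_eq_range hinf.nonempty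
  refine ⟨e, hA'A, fun j => hcofinite _ sdiff_subset ?_⟩
  rw [sdiff_sdiff_cancel_left (image_subset_range e _)]
  exact (finite_Iio j).image e

lemma GammaLike.not_predWinG1_of_alpha2 {X : Type*} {𝒜 ℬ : Set (Set X)}
    (hℬ : GammaLike ℬ) (h2 : Alpha2 𝒜 ℬ) : ¬ PredWinG1 𝒜 ℬ := by
  rintro ⟨A, hA, hwin⟩
  obtain ⟨B, hB, hinf⟩ := h2 A hA
  obtain ⟨a, ha_inj, ha⟩ := exists_injective_forall_mem_of_infinite hinf
  refine hwin a (fun n => (ha n).1) ((hℬ B hB).2 _ ?_ (infinite_range_of_injective ha_inj))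
  exact range_subset_iff.2 fun n => (ha n).2

lemma AlmostGammaLike.alpha2_of_not_predWinG1 {X : Type*} {𝒜 ℬ : Set (Set X)}
    (h𝒜 : AlmostGammaLike 𝒜) (hwin : ¬ PredWinG1 𝒜 ℬ) : Alpha2 𝒜 ℬ := by
  intro A hA
  choose e he_sub he_tail using fun n => h𝒜.exists_seq_tails_mem (hA n)
  let tail (k : ℕ) : Set X := range (e k.unpair.1) \ e k.unpair.1 '' Iio k.unpair.2
  obtain ⟨a, ha, haℬ⟩ : ∃ a : ℕ → X, (∀ k, a k ∈ tail k) ∧ range a ∈ ℬ := by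
    by_contra! h
    exact hwin ⟨tail, fun k => he_tail _ _, h⟩
  refine ⟨range a, haℬ, fun n => ?_⟩
  refine (infinite_of_forall_exists_notMem_image_Iio (f := e n) inter_subset_left ?_).mono
    (inter_subset_inter_left _ (he_sub n))
  intro j
  obtain ⟨hcore, hfresh⟩ : a (Nat.pair n j) ∈ range (e n) \ e n '' Iio j := by
    simpa only [tail, Nat.unpair_pair] using ha (Nat.pair n j)
  exact ⟨_, ⟨hcore, mem_range_self _⟩, hfresh⟩

/-- If 𝒜 is almost-Γ-like and ℬ is Γ-like, then α₂(𝒜,ℬ) holds iff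
Player I has no winning predetermined strategy in G₁(𝒜,ℬ). -/
theorem stmt0 {X : Type*} (𝒜 ℬ : Set (Set X))
    (hA : AlmostGammaLike 𝒜) (hB : GammaLike ℬ) :
    Alpha2 𝒜 ℬ ↔ ¬ PredWinG1 𝒜 ℬ :=
  ⟨hB.not_predWinG1_of_alpha2, hA.alpha2_of_not_predWinG1⟩
end

section
/- Let X be a set and let 𝒜, ℬ be collections of subsets of X. If 𝒜 is almost-Γ-like, then α₂(𝒜,ℬ) holds if and only if α₂'(𝒜,ℬ) holds. -/
open Set

/-!
Both conditions only concern countably many members of `𝒜` at a time. For `A ∈ 𝒜` with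
countably infinite core `A'`, the cofinite subsets of `A'` form a countable subfamily of `𝒜`,
since they correspond to the finite subsets of `A'`. Apply α₂' to all of them at once: if
`A ∩ B` were finite, then `A' \ B` would be one of these sets, yet it misses `B`.
-/

theorem countable_ofPred_cofinite_subset {X : Type*} {S : Set X} (hS : S.Countable) :
    {C | C ⊆ S ∧ (S \ C).Finite}.Countable := by
  refine ((countable_ofPred_finite_subset hS).image (S \ ·)).mono ?_
  rintro C ⟨hCS, hfin⟩
  exact ⟨S \ C, ⟨hfin, sdiff_subset⟩, sdiff_sdiff_cancel_left hCS⟩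

theorem Alpha2'.exists_forall_inter_nonempty {X : Type*} {𝒜 ℬ 𝒞 : Set (Set X)}
    (h : Alpha2' 𝒜 ℬ) (h𝒞 : 𝒞 ⊆ 𝒜) (hc : 𝒞.Countable) (hne : 𝒞.Nonempty) :
    ∃ B ∈ ℬ, ∀ C ∈ 𝒞, (C ∩ B).Nonempty := by
  obtain ⟨f, rfl⟩ := hc.exists_eq_range hne
  obtain ⟨B, hB, hmeet⟩ := h f fun n => h𝒞 (mem_range_self n)
  exact ⟨B, hB, forall_mem_range.2 hmeet⟩

/-- If 𝒜 is almost-Γ-like, then α₂(𝒜,ℬ) holds iff α₂'(𝒜,ℬ) holds. -/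
theorem stmt1 {X : Type*} (𝒜 ℬ : Set (Set X))
    (hA : AlmostGammaLike 𝒜) :
    Alpha2 𝒜 ℬ ↔ Alpha2' 𝒜 ℬ := by
  refine ⟨fun h A hA𝒜 => ?_, fun h A hA𝒜 => ?_⟩
  · obtain ⟨B, hB, hinf⟩ := h A hA𝒜
    exact ⟨B, hB, fun n => (hinf n).nonempty⟩
  choose A' hA'A hcount _ hcof using fun n => hA (A n) (hA𝒜 n)
  set 𝒞 := ⋃ n, {C | C ⊆ A' n ∧ (A' n \ C).Finite}
  have h𝒞 : 𝒞 ⊆ 𝒜 := iUnion_subset fun n C hC => hcof n C hC.1 hC.2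
  have hc : 𝒞.Countable := countable_iUnion fun n => countable_ofPred_cofinite_subset (hcount n)
  have hne : 𝒞.Nonempty := ⟨A' 0, mem_iUnion_of_mem 0 ⟨subset_rfl, by simp⟩⟩
  obtain ⟨B, hB, hmeet⟩ := h.exists_forall_inter_nonempty h𝒞 hc hne
  refine ⟨B, hB, fun n hfin => ?_⟩
  have hcore : A' n \ B ∈ 𝒞 := mem_iUnion_of_mem n ⟨sdiff_subset, by
    rw [sdiff_sdiff_right_self]
    exact hfin.subset (inter_subset_inter_left B (hA'A n))⟩
  obtain ⟨x, hxB', hxB⟩ := hmeet _ hcore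
  exact hxB'.2 hxB
end

section
/- Let X be a set and let 𝒜, ℬ be collections of subsets of X. If 𝒜 is almost-Γ-like and ℬ is Γ-like, then α₄(𝒜,ℬ) holds if and only if Player I has no winning predetermined strategy in the selection game G_{<2}(𝒜,ℬ). -/
open Set

/-- If 𝒜 is almost-Γ-like and ℬ is Γ-like, then α₄(𝒜,ℬ) holds iff
Player I has no winning predetermined strategy in G_{<2}(𝒜,ℬ). -/
theorem stmt2 {X : Type*} (𝒜 ℬ : Set (Set X))
    (hA : AlmostGammaLike 𝒜) (hB : GammaLike ℬ) :
    Alpha4 𝒜 ℬ ↔ ¬ PredWinGlt2 𝒜 ℬ := by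
  constructor
  · -- α₄ ⇒ no winning predetermined strategy
    rintro h4 ⟨A, hAmem, hwin⟩
    choose A' hsub hcount hinf hcof using fun n => hA (A n) (hAmem n)
    set U : Set X := ⋃ n, A' n with hUdef
    have hUc : U.Countable := countable_iUnion hcount
    have hUne : U.Nonempty := by
      obtain ⟨x, hx⟩ := (hinf 0).nonempty
      exact ⟨x, mem_iUnion.2 ⟨0, hx⟩⟩
    obtain ⟨u, hu⟩ := hUc.exists_eq_range hUne
    set D : ℕ → Set X := fun n => A' n \ (u '' Set.Iio n) with hDdef
    have hDmem : ∀ n, D n ∈ 𝒜 := by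
      intro n
      refine hcof n (D n) diff_subset ?_
      have : A' n \ D n ⊆ u '' Set.Iio n := by
        intro x hx
        rcases hx with ⟨hx1, hx2⟩
        by_contra hxim
        exact hx2 ⟨hx1, hxim⟩
      exact ((Set.finite_Iio n).image u).subset this
    obtain ⟨B, hBmem, hI⟩ := h4 D hDmem
    classical
    set F : ℕ → Set X := fun n =>
      if h : (D n ∩ B).Nonempty then {h.some} else ∅ with hFdef
    have hFsub : ∀ n, F n ⊆ D n ∩ B := by
      intro n x hx
      simp only [hFdef] at hx
      split_ifs at hx with h
      · rcases hx with rfl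
        exact h.some_mem
      · exact absurd hx (notMem_empty x)
    have hFvalid : ∀ n, (F n).Subsingleton ∧ F n ⊆ A n := by
      intro n
      constructor
      · simp only [hFdef]
        split_ifs
        · exact subsingleton_singleton
        · exact subsingleton_empty
      · exact fun x hx => hsub n (((hFsub n) hx).1.1)
    have hUnionB : (⋃ n, F n) ⊆ B := by
      intro x hx
      rcases mem_iUnion.1 hx with ⟨n, hn⟩
      exact ((hFsub n) hn).2
    -- the union is infinite
    have hUnionInf : (⋃ n, F n).Infinite := by
      intro hfin
      -- index function
      have hidx : ∀ x ∈ U, ∃ j, u j = x := by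
        intro x hx
        rw [hu] at hx
        exact hx
      set idx : X → ℕ := fun x => sInf {j | u j = x} with hidxdef
      obtain ⟨M, hM⟩ := (hfin.image idx).bddAbove
      have hIsub : {n | (D n ∩ B).Nonempty} ⊆ Set.Iic M := by
        intro n hn
        have hn' : (D n ∩ B).Nonempty := hn
        have hx : (Set.Nonempty.some hn') ∈ F n := by
          show _ ∈ if h : (D n ∩ B).Nonempty then ({h.some} : Set X) else ∅
          rw [dif_pos hn']
          exact mem_singleton _
        set x := Set.Nonempty.some hn' with hxdef
        have hxD : x ∈ D n := hn'.some_mem.1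
        have hxU : x ∈ U := mem_iUnion.2 ⟨n, hxD.1⟩
        have hne : {j | u j = x}.Nonempty := hidx x hxU
        have h1 : n ≤ idx x := by
          refine le_csInf hne ?_
          intro j hj
          by_contra hlt
          push_neg at hlt
          exact hxD.2 ⟨j, hlt, hj⟩
        have h2 : idx x ≤ M := hM ⟨x, mem_iUnion.2 ⟨n, hx⟩, rfl⟩
        exact le_trans h1 h2
      exact hI ((Set.finite_Iic M).subset hIsub)
    exact hwin F hFvalid ((hB B hBmem).2 _ hUnionB hUnionInf)
  · -- no winning strategy ⇒ α₄
    intro hnp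
    intro A hAm
    by_contra hc
    push_neg at hc
    refine hnp ⟨A, hAm, ?_⟩
    intro F hF hUB
    have hBinf : (⋃ n, F n).Infinite := (hB _ hUB).1
    have hJ : {n | (F n).Nonempty}.Infinite := by
      intro hJfin
      refine hBinf ?_
      have : (⋃ n, F n) ⊆ ⋃ n ∈ {n | (F n).Nonempty}, F n := by
        intro x hx
        rcases mem_iUnion.1 hx with ⟨n, hn⟩
        exact mem_iUnion₂.2 ⟨n, ⟨x, hn⟩, hn⟩
      exact ((hJfin.biUnion fun n _ => (hF n).1.finite).subset this)
    have hmono : {n | (F n).Nonempty} ⊆ {n | (A n ∩ ⋃ m, F m).Nonempty} := by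
      intro n hn
      rcases hn with ⟨x, hx⟩
      exact ⟨x, (hF n).2 hx, mem_iUnion.2 ⟨n, hx⟩⟩
    exact (hJ.mono hmono) (hc (⋃ n, F n) hUB)
end

section
/- Let X be a set and let 𝒜, ℬ be collections of subsets of X. If 𝒜 is almost-Γ-like and ℬ is Γ-like, then α₄(𝒜,ℬ) holds if and only if Player I has no winning predetermined strategy in the selection game G_fin(𝒜,ℬ). -/
open Set

/-
Shrink the countable sets `A'ₙ ⊆ Aₙ` given by almost-Γ-likeness cofinitely, removing from
`A'ₙ` the points of index `< n` in a fixed injection of `⋃ₙ A'ₙ` into `ℕ`; the sets `Cₙ` still lie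
in `𝒜`, and every point lies in only finitely many of them. α₄ gives `B ∈ ℬ` meeting infinitely
many `Cₙ`; choosing one point of `Cₙ ∩ B` for each such `n` yields infinitely many distinct points
(each point is chosen for only finitely many `n`), hence a member of `ℬ` that Player II obtains
by playing at most one point per round. Conversely, a play of II producing `⋃ₙ Fₙ ∈ ℬ` has
infinitely many nonempty `Fₙ`, since members of `ℬ` are infinite.
-/

lemma exists_cofinite_subsets_pointFinite {X : Type*} (A : ℕ → Set X)
    (hA : ∀ n, (A n).Countable) :
    ∃ C : ℕ → Set X, (∀ n, C n ⊆ A n ∧ (A n \ C n).Finite) ∧ ∀ x, {n | x ∈ C n}.Finite := by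
  obtain ⟨f, hf⟩ := countable_iff_exists_injOn.mp (countable_iUnion hA)
  refine ⟨fun n => A n \ {x | f x < n}, fun n => ⟨sdiff_subset, ?_⟩, fun x => ?_⟩
  · rw [sdiff_sdiff_right_self]
    refine Finite.of_finite_image ((finite_Iio n).subset ?_) (hf.mono ?_)
    · rintro _ ⟨x, ⟨-, hx⟩, rfl⟩
      exact hx
    · exact fun x hx => mem_iUnion_of_mem n hx.1
  · refine (finite_Iic (f x)).subset fun n hn => ?_
    simpa using hn.2

lemma infinite_image_of_pointFinite {ι X : Type*} {C : ι → Set X}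
    (hC : ∀ x, {i | x ∈ C i}.Finite) {J : Set ι} (hJ : J.Infinite) {w : ι → X}
    (hw : ∀ i ∈ J, w i ∈ C i) : (w '' J).Infinite :=
  fun himage => hJ <| (himage.biUnion fun x _ => hC x).subset fun i hi =>
    mem_biUnion (mem_image_of_mem w hi) (hw i hi)

lemma GammaLike.exists_finite_subsets_iUnion_mem {X : Type*} {ℬ : Set (Set X)}
    (hℬ : GammaLike ℬ) {C : ℕ → Set X} (hC : ∀ x, {n | x ∈ C n}.Finite) {B : Set X}
    (hB : B ∈ ℬ) (hmeet : {n | (C n ∩ B).Nonempty}.Infinite) :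
    ∃ F : ℕ → Set X, (∀ n, (F n).Finite ∧ F n ⊆ C n) ∧ (⋃ n, F n) ∈ ℬ := by
  have : Nonempty X := (hℬ B hB).1.nonempty.to_subtype.map Subtype.val
  choose! w hw using fun n (hn : (C n ∩ B).Nonempty) => hn
  set J := {n | (C n ∩ B).Nonempty}
  refine ⟨fun n => w '' (J ∩ {n}), fun n => ⟨(finite_singleton n).inter_of_right J |>.image w,
    ?_⟩, ?_⟩
  · rintro _ ⟨m, ⟨hm, rfl⟩, rfl⟩
    exact (hw m hm).1
  · have hunion : (⋃ n, w '' (J ∩ {n})) = w '' J := by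
      rw [← image_iUnion, ← inter_iUnion, iUnion_singleton_eq_range, range_id', inter_univ]
    rw [hunion]
    refine (hℬ B hB).2 _ ?_ (infinite_image_of_pointFinite hC hmeet fun n hn => (hw n hn).1)
    rintro _ ⟨n, hn, rfl⟩
    exact (hw n hn).2

lemma not_predWinGfin_of_alpha4 {X : Type*} {𝒜 ℬ : Set (Set X)} (h𝒜 : AlmostGammaLike 𝒜)
    (hℬ : GammaLike ℬ) (hα : Alpha4 𝒜 ℬ) : ¬ PredWinGfin 𝒜 ℬ := by
  rintro ⟨A, hA, hwin⟩
  choose A' hA'A hcount _ hcofinite using fun n => h𝒜 (A n) (hA n)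
  obtain ⟨C, hCA', hC⟩ := exists_cofinite_subsets_pointFinite A' hcount
  obtain ⟨B, hB, hmeet⟩ := hα C fun n => hcofinite n _ (hCA' n).1 (hCA' n).2
  obtain ⟨F, hF, hFℬ⟩ := hℬ.exists_finite_subsets_iUnion_mem hC hB hmeet
  exact hwin F (fun n => ⟨(hF n).1, (hF n).2.trans <| (hCA' n).1.trans (hA'A n)⟩) hFℬ

lemma alpha4_of_not_predWinGfin {X : Type*} {𝒜 ℬ : Set (Set X)}
    (hℬ : ∀ B ∈ ℬ, B.Infinite) (hnwin : ¬ PredWinGfin 𝒜 ℬ) : Alpha4 𝒜 ℬ := by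
  intro A hA
  obtain ⟨F, hF, hFℬ⟩ : ∃ F : ℕ → Set X, (∀ n, (F n).Finite ∧ F n ⊆ A n) ∧ (⋃ n, F n) ∈ ℬ := by
    by_contra! h
    exact hnwin ⟨A, hA, h⟩
  have hmeet : ∀ n, (F n).Nonempty → (A n ∩ ⋃ m, F m).Nonempty := fun n ⟨x, hx⟩ =>
    ⟨x, (hF n).2 hx, mem_iUnion_of_mem n hx⟩
  refine ⟨⋃ n, F n, hFℬ, fun hfin => hℬ _ hFℬ ?_⟩
  exact Finite.iUnion (hfin.subset hmeet) (fun n _ => (hF n).1) fun n hn =>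
    not_nonempty_iff_eq_empty.mp hn

/-- If 𝒜 is almost-Γ-like and ℬ is Γ-like, then α₄(𝒜,ℬ) holds iff
Player I has no winning predetermined strategy in G_fin(𝒜,ℬ). -/
theorem stmt3 {X : Type*} (𝒜 ℬ : Set (Set X))
    (hA : AlmostGammaLike 𝒜) (hB : GammaLike ℬ) :
    Alpha4 𝒜 ℬ ↔ ¬ PredWinGfin 𝒜 ℬ :=
  ⟨not_predWinGfin_of_alpha4 hA hB, alpha4_of_not_predWinGfin fun B hB' => (hB B hB').1⟩
end

section
/- Let X be a set and let 𝒜, ℬ be collections of subsets of X with ℬ Γ-like. Then Player I has a winning predetermined strategy in G_{<2}(𝒜,ℬ) if and only if Player I has a winning predetermined strategy in G_fin(𝒜,ℬ). -/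
open Set

/-- Assign to each point of the union an index of a set containing it. Each index is hit only
finitely often, so infinitely many indices occur, and one representative per occurring index
already forms an infinite set. -/
theorem Set.exists_subsingleton_subsets_iUnion_infinite {ι X : Type*} {F : ι → Set X}
    (hF : ∀ i, (F i).Finite) (h : (⋃ i, F i).Infinite) :
    ∃ G : ι → Set X, (∀ i, (G i).Subsingleton ∧ G i ⊆ F i) ∧ (⋃ i, G i).Infinite := by
  set U := ⋃ i, F i
  obtain ⟨i₀, -⟩ := mem_iUnion.1 h.nonempty.some_mem
  have : Nonempty ι := ⟨i₀⟩
  choose! idx hidx using fun x (hx : x ∈ U) => mem_iUnion.1 hx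
  obtain ⟨R, hRU, hinj, himg⟩ := (surjOn_image idx U).exists_subset_injOn_image_eq
  have hU_sub : U ⊆ ⋃ i ∈ idx '' U, F i := fun x hx =>
    mem_biUnion (mem_image_of_mem idx hx) (hidx x hx)
  have hR : R.Infinite := fun hR =>
    h (((himg ▸ hR.image idx).biUnion fun i _ => hF i).subset hU_sub)
  refine ⟨fun i => R ∩ idx ⁻¹' {i}, fun i => ⟨?_, ?_⟩, ?_⟩
  · exact fun x hx y hy => hinj hx.1 hy.1 (hx.2.trans hy.2.symm)
  · rintro x ⟨hxR, rfl⟩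
    exact hidx x (hRU hxR)
  · rwa [← inter_iUnion, ← preimage_iUnion, iUnion_of_singleton, preimage_univ, inter_univ]

theorem PredWinGfin.predWinGlt2 {X : Type*} {𝒜 ℬ : Set (Set X)} (h : PredWinGfin 𝒜 ℬ) :
    PredWinGlt2 𝒜 ℬ := by
  obtain ⟨A, hA, hwin⟩ := h
  exact ⟨A, hA, fun F hF => hwin F fun n => ⟨(hF n).1.finite, (hF n).2⟩⟩

/-- A counterplay of II in G_fin thins out to one in G_{<2} whose union is still an infinite
subset of the original union, hence still in the Γ-like `ℬ`. -/
theorem PredWinGlt2.predWinGfin {X : Type*} {𝒜 ℬ : Set (Set X)} (hB : GammaLike ℬ)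
    (h : PredWinGlt2 𝒜 ℬ) : PredWinGfin 𝒜 ℬ := by
  obtain ⟨A, hA, hwin⟩ := h
  refine ⟨A, hA, fun F hF hFB => ?_⟩
  obtain ⟨hFinf, hB_sub⟩ := hB _ hFB
  obtain ⟨G, hG, hGinf⟩ := exists_subsingleton_subsets_iUnion_infinite (fun n => (hF n).1) hFinf
  exact hwin G (fun n => ⟨(hG n).1, (hG n).2.trans (hF n).2⟩)
    (hB_sub _ (iUnion_mono fun n => (hG n).2) hGinf)

/-- If ℬ is Γ-like, Player I has a winning predetermined strategy in G_{<2}(𝒜,ℬ)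
iff Player I has a winning predetermined strategy in G_fin(𝒜,ℬ). -/
theorem stmt4 {X : Type*} (𝒜 ℬ : Set (Set X))
    (hB : GammaLike ℬ) :
    PredWinGlt2 𝒜 ℬ ↔ PredWinGfin 𝒜 ℬ :=
  ⟨PredWinGlt2.predWinGfin hB, PredWinGfin.predWinGlt2⟩
end

section
/- Let X be a set and let 𝒜, ℬ be collections of subsets of X with ℬ Γ-like. Then Player I has a winning (perfect-information) strategy in G_{<2}(𝒜,ℬ) if and only if Player I has a winning (perfect-information) strategy in G_fin(𝒜,ℬ). -/
open Set

/-!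
Subsingleton moves are in particular finite, so a winning strategy in `G_fin(𝒜,ℬ)` also wins
`G_{<2}(𝒜,ℬ)`. Conversely, let `σ` win `G_{<2}(𝒜,ℬ)`. Against finite moves `F₀, F₁, …`,
Player I plays as `σ` would against the moves `Gₙ ⊆ Fₙ`, where `Gₙ` is a single point of
`Fₙ \ (F₀ ∪ ⋯ ∪ Fₙ₋₁)` when that set is nonempty and `Gₙ = ∅` otherwise. Since `Gₙ` depends
only on `F₀, …, Fₙ`, this is a strategy. If `⋃ Fₙ ∈ ℬ`, it is infinite, so infinitely many of
the finite sets `Fₙ \ (F₀ ∪ ⋯ ∪ Fₙ₋₁)` are nonempty; the `Gₙ` are pairwise disjoint, hence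
`⋃ Gₙ` is an infinite subset of `⋃ Fₙ` and lies in `ℬ` by Γ-likeness, contradicting that `σ` wins.
-/

section

variable {X : Type*}

namespace Set

def pickPoint (s : Set X) : Set X :=
  {x | ∃ h : s.Nonempty, x = h.some}

theorem pickPoint_subsingleton (s : Set X) : (pickPoint s).Subsingleton := by
  rintro x ⟨h, rfl⟩ y ⟨-, rfl⟩
  rfl

theorem pickPoint_subset (s : Set X) : pickPoint s ⊆ s := by
  rintro x ⟨h, rfl⟩
  exact h.some_mem

theorem pickPoint_nonempty {s : Set X} (h : s.Nonempty) : (pickPoint s).Nonempty :=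
  ⟨h.some, h, rfl⟩

end Set

theorem disjointed_congr_of_eq_on_le {ι α : Type*} [Preorder ι] [LocallyFiniteOrderBot ι]
    [GeneralizedBooleanAlgebra α] {f g : ι → α} {i : ι} (h : ∀ j ≤ i, f j = g j) :
    disjointed f i = disjointed g i := by
  rw [disjointed_apply, disjointed_apply, h i le_rfl,
    Finset.sup_congr rfl fun j hj => h j (Finset.mem_Iio.1 hj).le]

theorem iUnion_pickPoint_disjointed_infinite {F : ℕ → Set X} (hF : ∀ n, (F n).Finite)
    (hinf : (⋃ n, F n).Infinite) : (⋃ n, pickPoint (disjointed F n)).Infinite := by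
  set S := {n | (disjointed F n).Nonempty}
  have hS : S.Infinite := by
    intro hS
    apply hinf
    rw [← iUnion_disjointed]
    refine (hS.biUnion fun n _ => (hF n).subset (disjointed_subset F n)).subset ?_
    intro x hx
    obtain ⟨n, hn⟩ := mem_iUnion.1 hx
    exact mem_biUnion (show n ∈ S from ⟨x, hn⟩) hn
  have hpick : ∀ n : S, (pickPoint (disjointed F n)).Nonempty := fun n => pickPoint_nonempty n.2
  choose p hp using hpick
  have hp_inj : Function.Injective p := by
    intro m n hmn
    by_contra hne
    refine disjoint_left.1 (disjoint_disjointed F fun h => hne (Subtype.ext h))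
      (pickPoint_subset _ (hp m)) ?_
    rw [hmn]
    exact pickPoint_subset _ (hp n)
  have : Infinite S := hS.to_subtype
  exact infinite_of_injective_forall_mem hp_inj fun n => mem_iUnion.2 ⟨n, hp n⟩

def pickNewPoints (l : List (Set X)) : List (Set X) :=
  List.ofFn fun i : Fin l.length => pickPoint (disjointed (fun j => l.getD j ∅) i)

theorem pickNewPoints_subsingleton (l : List (Set X)) :
    ∀ G ∈ pickNewPoints l, G.Subsingleton := by
  intro G hG
  obtain ⟨i, rfl⟩ := List.mem_ofFn.1 hG
  exact pickPoint_subsingleton _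

theorem pickNewPoints_ofFn (F : ℕ → Set X) (n : ℕ) :
    pickNewPoints (List.ofFn fun i : Fin n => F i) =
      List.ofFn fun i : Fin n => pickPoint (disjointed F i) := by
  refine List.ext_getElem (by simp [pickNewPoints]) fun i _ h₂ => ?_
  simp only [pickNewPoints, List.getElem_ofFn]
  congr 1
  refine disjointed_congr_of_eq_on_le fun j hj => ?_
  have hjn : j < n := lt_of_le_of_lt hj (by simpa using h₂)
  rw [List.getD_eq_getElem _ _ (by simpa using hjn), List.getElem_ofFn]

theorem WinGlt2.of_winGfin {𝒜 ℬ : Set (Set X)} (h : WinGfin 𝒜 ℬ) : WinGlt2 𝒜 ℬ := by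
  obtain ⟨σ, hσ𝒜, hσwin⟩ := h
  exact ⟨σ, fun s hs => hσ𝒜 s fun F hF => (hs F hF).finite,
    fun F hF => hσwin F fun n => ⟨(hF n).1.finite, (hF n).2⟩⟩

theorem WinGfin.of_winGlt2 {𝒜 ℬ : Set (Set X)} (hℬ : GammaLike ℬ) (h : WinGlt2 𝒜 ℬ) :
    WinGfin 𝒜 ℬ := by
  obtain ⟨σ, hσ𝒜, hσwin⟩ := h
  refine ⟨fun s => σ (pickNewPoints s), fun s _ => hσ𝒜 _ (pickNewPoints_subsingleton s), ?_⟩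
  intro F hF hℬF
  set G : ℕ → Set X := fun n => pickPoint (disjointed F n)
  have hGF : ∀ n, G n ⊆ F n := fun n => (pickPoint_subset _).trans (disjointed_subset F n)
  have hGplay : ∀ n, (G n).Subsingleton ∧ G n ⊆ σ (List.ofFn fun i : Fin n => G i) := by
    intro n
    refine ⟨pickPoint_subsingleton _, ?_⟩
    rw [← pickNewPoints_ofFn]
    exact (hGF n).trans (hF n).2
  obtain ⟨hinf, hsub⟩ := hℬ _ hℬF
  exact hσwin G hGplay (hsub _ (iUnion_mono hGF)
    (iUnion_pickPoint_disjointed_infinite (fun n => (hF n).1) hinf))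

end

/-- If ℬ is Γ-like, Player I has a winning perfect-information strategy in G_{<2}(𝒜,ℬ)
iff Player I has a winning perfect-information strategy in G_fin(𝒜,ℬ). -/
theorem stmt5 {X : Type*} (𝒜 ℬ : Set (Set X))
    (hB : GammaLike ℬ) :
    WinGlt2 𝒜 ℬ ↔ WinGfin 𝒜 ℬ :=
  ⟨WinGfin.of_winGlt2 hB, WinGlt2.of_winGfin⟩
end

section
/- Let X be a set and let 𝒜, ℬ be collections of subsets of X with 𝒜 almost-Γ-like and ℬ Γ-like. Then Player I has a winning (perfect-information) strategy in G₁(𝒜,ℬ) if and only if Player I has a winning predetermined strategy in G₁(𝒜,ℬ). -/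
open Set

/-! A winning strategy `σ` for Player I may be thinned, at each position `s`, to a countable
set `C s ⊆ σ s` all of whose cofinite subsets still lie in `𝒜`. Only countably many positions
arise when II answers inside these sets; enumerate them as `e 0, e 1, …` and let I play
`C (e n)` minus the points already used in `e n` at round `n`. Any counterplay `a` of II
against this predetermined strategy can be rearranged into a play against `σ` consisting of
distinct points of `range a`; if `range a` were in the Γ-like `ℬ`, so would be this infinite
subset, contradicting that `σ` is winning. -/

open Function

section

variable {X : Type*}

def reachablePositions (C : List X → Set X) : ℕ → Set (List X)
  | 0 => {[]}
  | n + 1 => ⋃ s ∈ reachablePositions C n, (fun x => s ++ [x]) '' C s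

theorem countable_reachablePositions {C : List X → Set X} (hC : ∀ s, (C s).Countable) (n : ℕ) :
    (reachablePositions C n).Countable := by
  induction n with
  | zero => exact countable_singleton _
  | succ n ih => exact ih.biUnion fun s _ => (hC s).image _

theorem exists_countable_positions_closed {C : List X → Set X} (hC : ∀ s, (C s).Countable) :
    ∃ T : Set (List X), T.Countable ∧ [] ∈ T ∧ ∀ s ∈ T, ∀ x ∈ C s, s ++ [x] ∈ T := by
  refine ⟨⋃ n, reachablePositions C n, countable_iUnion (countable_reachablePositions hC),
    mem_iUnion.2 ⟨0, rfl⟩, ?_⟩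
  simp only [mem_iUnion]
  rintro s ⟨n, hs⟩ x hx
  exact ⟨n + 1, mem_biUnion hs ⟨x, hx, rfl⟩⟩

theorem exists_injective_play_of_enumeration (e : ℕ → List X) (a : ℕ → X)
    (hnil : [] ∈ range e) (hext : ∀ n, e n ++ [a n] ∈ range e) (hfresh : ∀ n, a n ∉ e n) :
    ∃ b : ℕ → X, Injective b ∧ range b ⊆ range a ∧
      ∀ k, ∃ n, e n = List.ofFn (fun i : Fin k => b i) ∧ b k = a n := by
  obtain ⟨n₀, hn₀⟩ := hnil
  choose next hnext using hext
  obtain ⟨idx, hidx₀, hidx_succ⟩ : ∃ idx : ℕ → ℕ, idx 0 = n₀ ∧ ∀ k, idx (k + 1) = next (idx k) :=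
    ⟨fun k => next^[k] n₀, rfl, fun k => iterate_succ_apply' next k n₀⟩
  have hidx : ∀ k, e (idx k) = List.ofFn (fun i : Fin k => a (idx i)) := by
    intro k
    induction k with
    | zero => rw [hidx₀, hn₀, List.ofFn_zero]
    | succ k ih =>
      rw [hidx_succ, hnext, ih, List.ofFn_succ_last]
      rfl
  refine ⟨a ∘ idx, Injective.of_lt_imp_ne fun j k hjk heq => ?_, range_comp_subset_range _ _,
    fun k => ⟨idx k, hidx k, rfl⟩⟩
  apply hfresh (idx k)
  rw [hidx, ← comp_apply (f := a), ← heq]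
  exact List.mem_ofFn.2 ⟨⟨j, hjk⟩, rfl⟩

theorem predWinG1_of_winG1 {𝒜 ℬ : Set (Set X)} (hA : AlmostGammaLike 𝒜) (hB : GammaLike ℬ)
    (h : WinG1 𝒜 ℬ) : PredWinG1 𝒜 ℬ := by
  obtain ⟨σ, hσ𝒜, hσwin⟩ := h
  choose C hCσ hCcount _ hCcofinite using fun s => hA (σ s) (hσ𝒜 s)
  obtain ⟨T, hTcount, hnil, hTclosed⟩ := exists_countable_positions_closed hCcount
  obtain ⟨e, rfl⟩ := hTcount.exists_eq_range ⟨[], hnil⟩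
  refine ⟨fun n => C (e n) \ {x | x ∈ e n}, fun n => ?_, fun a ha hℬ => ?_⟩
  · refine hCcofinite _ _ sdiff_subset ((e n).finite_toSet.subset ?_)
    rw [sdiff_sdiff_right_self]
    exact inter_subset_right
  obtain ⟨b, hbinj, hba, hbplay⟩ := exists_injective_play_of_enumeration e a hnil
    (fun n => hTclosed _ (mem_range_self n) _ (ha n).1) (fun n => (ha n).2)
  refine hσwin b (fun k => ?_) ((hB _ hℬ).2 _ hba (infinite_range_of_injective hbinj))
  obtain ⟨n, hn, hbk⟩ := hbplay k
  rw [← hn, hbk]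
  exact hCσ _ (ha n).1

theorem winG1_of_predWinG1 {𝒜 ℬ : Set (Set X)} (h : PredWinG1 𝒜 ℬ) : WinG1 𝒜 ℬ := by
  obtain ⟨A, hA𝒜, hAwin⟩ := h
  exact ⟨fun s => A s.length, fun s => hA𝒜 _, fun a ha => hAwin a fun n => by simpa using ha n⟩

end

/-- If 𝒜 is almost-Γ-like and ℬ is Γ-like, Player I has a winning perfect-information
strategy in G₁(𝒜,ℬ) iff Player I has a winning predetermined strategy there. -/
theorem stmt7 {X : Type*} (𝒜 ℬ : Set (Set X))
    (hA : AlmostGammaLike 𝒜) (hB : GammaLike ℬ) :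
    WinG1 𝒜 ℬ ↔ PredWinG1 𝒜 ℬ :=
  ⟨predWinG1_of_winG1 hA hB, winG1_of_predWinG1⟩
end

section
/- Let X be a set and let 𝒜, ℬ be collections of subsets of X with ℬ Γ-like and ℬ ⊆ 𝒜. If Player I has no winning predetermined strategy in G_fin(𝒜,ℬ), then 𝒜 is almost-Γ-like. -/
open Set

theorem GammaLike.mem_of_subset_of_diff_finite {X : Type*} {ℬ : Set (Set X)} (hℬ : GammaLike ℬ)
    {B C : Set X} (hB : B ∈ ℬ) (hCB : C ⊆ B) (hfin : (B \ C).Finite) : C ∈ ℬ := by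
  obtain ⟨hBinf, hsub⟩ := hℬ B hB
  refine hsub C hCB ?_
  simpa only [sdiff_sdiff_cancel_left hCB] using hBinf.sdiff hfin

/-- A winning reply of II to the constant strategy `A, A, A, …` is a countable union of finite
subsets of `A` lying in `ℬ`. -/
theorem exists_countable_mem_subset_of_not_predWinGfin {X : Type*} {𝒜 ℬ : Set (Set X)}
    (h : ¬ PredWinGfin 𝒜 ℬ) {A : Set X} (hA : A ∈ 𝒜) : ∃ B ∈ ℬ, B ⊆ A ∧ B.Countable := by
  simp only [PredWinGfin, not_exists, not_and, not_forall, not_not] at h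
  obtain ⟨F, hF, hFℬ⟩ := h (fun _ => A) (fun _ => hA)
  exact ⟨⋃ n, F n, hFℬ, iUnion_subset fun n => (hF n).2,
    countable_iUnion fun n => (hF n).1.countable⟩

/-- If ℬ is Γ-like, ℬ ⊆ 𝒜, and Player I has no winning predetermined strategy
in G_fin(𝒜,ℬ), then 𝒜 is almost-Γ-like. -/
theorem stmt8 {X : Type*} (𝒜 ℬ : Set (Set X))
    (hB : GammaLike ℬ) (hBA : ℬ ⊆ 𝒜) (h : ¬ PredWinGfin 𝒜 ℬ) :
    AlmostGammaLike 𝒜 := by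
  intro A hA
  obtain ⟨B, hBℬ, hBA', hBcount⟩ := exists_countable_mem_subset_of_not_predWinGfin h hA
  exact ⟨B, hBA', hBcount, (hB B hBℬ).1,
    fun C hCB hfin => hBA (hB.mem_of_subset_of_diff_finite hBℬ hCB hfin)⟩
end

section
/- Let X be a set and let 𝒜, ℬ be collections of subsets of X with ℬ Γ-like and ℬ ⊆ 𝒜. Then Player I has no winning (perfect-information) strategy in G₁(𝒜,ℬ) if and only if α₂(𝒜,ℬ) holds. -/
open Set

/-- auxiliary: turn a path code (list of child indices, most recent first) into a position. -/
def buildPos {X : Type*} (e : List X → ℕ → X) : List ℕ → List X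
  | [] => []
  | k :: t => buildPos e t ++ [e (buildPos e t) k]

/-- auxiliary: code of the history after `n` rounds, given a child selector `K`. -/
def hcFn (K : List ℕ → ℕ) : ℕ → List ℕ
  | 0 => []
  | n + 1 => K (hcFn K n) :: hcFn K n

def playHist {X : Type*} (e : List X → ℕ → X) (K : List ℕ → ℕ) (n : ℕ) : List X :=
  buildPos e (hcFn K n)

def playMove {X : Type*} (e : List X → ℕ → X) (K : List ℕ → ℕ) (n : ℕ) : X :=
  e (playHist e K n) (K (hcFn K n))

lemma playHist_succ {X : Type*} (e : List X → ℕ → X) (K : List ℕ → ℕ) (n : ℕ) :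
    playHist e K (n + 1) = playHist e K n ++ [playMove e K n] := rfl

lemma alpha2_noWin {X : Type*} (𝒜 ℬ : Set (Set X)) (hB : GammaLike ℬ) (hBA : ℬ ⊆ 𝒜)
    (hα : Alpha2 𝒜 ℬ) : ¬ WinG1 𝒜 ℬ := by
  rintro ⟨σ, hσA, hwin⟩
  -- every value of σ contains a countably infinite subset belonging to 𝒜 (enumerated by ef)
  have ctble : ∀ p : List X, ∃ f : ℕ → X, Set.range f ⊆ σ p ∧ Set.range f ∈ 𝒜 := by
    intro p
    obtain ⟨B₀, hB₀, h₀⟩ := hα (fun _ => σ p) (fun _ => hσA p)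
    have hinf : (σ p ∩ B₀).Infinite := h₀ 0
    set g := Set.Infinite.natEmbedding _ hinf with hg
    refine ⟨fun n => (g n : X), ?_, ?_⟩
    · rintro x ⟨n, rfl⟩; exact (g n).2.1
    · have hinj : Function.Injective (fun n => (g n : X)) :=
        fun m n h => g.injective (Subtype.ext h)
      have hsub : Set.range (fun n => (g n : X)) ⊆ B₀ := by
        rintro x ⟨n, rfl⟩; exact (g n).2.2
      exact hBA ((hB B₀ hB₀).2 _ hsub (Set.infinite_range_of_injective hinj))
  choose ef hsub hmem using ctble
  -- apply α₂ to all positions in the countable tree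
  obtain ⟨B, hBm, hmeet⟩ := hα
    (fun n => Set.range (ef (buildPos ef (Denumerable.ofNat (List ℕ) n))))
    (fun n => hmem _)
  have meet : ∀ s : List ℕ, (Set.range (ef (buildPos ef s)) ∩ B).Infinite := by
    intro s
    have := hmeet (Encodable.encode s)
    rwa [Denumerable.ofNat_encode] at this
  -- choose a good child at every node
  have move : ∀ s : List ℕ, ∃ k, ef (buildPos ef s) k ∈ B ∧ ef (buildPos ef s) k ∉ buildPos ef s := by
    intro s
    have hfin : {x | x ∈ buildPos ef s}.Finite := (buildPos ef s).finite_toSet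
    obtain ⟨x, hx⟩ := ((meet s).diff hfin).nonempty
    obtain ⟨⟨⟨k, hk⟩, hxB⟩, hxp⟩ := hx
    exact ⟨k, hk ▸ hxB, hk ▸ hxp⟩
  choose K hK1 hK2 using move
  set a := playMove ef K with ha
  have posEq : ∀ n, playHist ef K n = List.ofFn fun i : Fin n => a i := by
    intro n
    induction n with
    | zero => rfl
    | succ n ih =>
      rw [playHist_succ, ih, List.ofFn_succ']
      simp [List.concat_eq_append]
      rfl
  have hmemB : ∀ n, a n ∈ B := fun n => hK1 (hcFn K n)
  have hnotmem : ∀ n, a n ∉ playHist ef K n := fun n => hK2 (hcFn K n)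
  have hmono : ∀ m n, m ≤ n → ∀ x ∈ playHist ef K m, x ∈ playHist ef K n := by
    intro m n hmn
    induction n, hmn using Nat.le_induction with
    | base => exact fun x hx => hx
    | succ n _ ih =>
      intro x hx
      rw [playHist_succ]
      exact List.mem_append_left _ (ih x hx)
  have hinj : Function.Injective a := by
    have key : ∀ m n, m < n → a m ≠ a n := by
      intro m n hmn h
      apply hnotmem n
      have hm1 : a m ∈ playHist ef K (m + 1) := by
        rw [playHist_succ]
        exact List.mem_append_right _ (List.mem_singleton_self _)
      rw [← h]
      exact hmono (m + 1) n hmn _ hm1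
    intro m n h
    rcases lt_trichotomy m n with h' | h' | h'
    · exact absurd h (key m n h')
    · exact h'
    · exact absurd h.symm (key n m h')
  have hrange : Set.range a ∈ ℬ := by
    refine (hB B hBm).2 _ ?_ (Set.infinite_range_of_injective hinj)
    rintro x ⟨n, rfl⟩; exact hmemB n
  refine hwin a ?_ hrange
  intro n
  rw [← posEq n]
  exact hsub (playHist ef K n) ⟨K (hcFn K n), rfl⟩


lemma noWin_alpha2 {X : Type*} (𝒜 ℬ : Set (Set X)) (hB : GammaLike ℬ)
    (h : ¬ WinG1 𝒜 ℬ) : Alpha2 𝒜 ℬ := by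
  classical
  intro A hA
  by_contra hno
  push_neg at hno
  apply h
  refine ⟨fun s => A (Nat.unpair s.toFinset.card).1, fun s => hA _, ?_⟩
  intro a ha hrange
  obtain ⟨n₀, hfin⟩ := hno _ hrange
  replace hfin : (A n₀ ∩ Set.range a).Finite := hfin
  set D : ℕ → ℕ := fun n => (List.ofFn fun i : Fin n => a i).toFinset.card with hD
  have haD : ∀ n, a n ∈ A (Nat.unpair (D n)).1 := ha
  have hinfR : (Set.range a).Infinite := (hB _ hrange).1
  have histmono : ∀ {m n : ℕ}, m ≤ n →
      (List.ofFn fun i : Fin m => a i).toFinset ⊆ (List.ofFn fun i : Fin n => a i).toFinset := by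
    intro m n hmn x hx
    simp only [List.mem_toFinset, List.mem_ofFn, Set.mem_range] at hx ⊢
    obtain ⟨i, hi⟩ := hx
    exact ⟨⟨i, lt_of_lt_of_le i.2 hmn⟩, hi⟩
  have hDmono : Monotone D := fun m n hmn => Finset.card_le_card (histmono hmn)
  have hsuccList : ∀ n : ℕ, (List.ofFn fun i : Fin (n+1) => a i)
      = (List.ofFn fun i : Fin n => a i) ++ [a n] := by
    intro n
    rw [List.ofFn_succ']
    simp [List.concat_eq_append]
  have hDsucc : ∀ n, D (n + 1) ≤ D n + 1 := by
    intro n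
    rw [hD]
    simp only [hsuccList n, List.toFinset_append]
    calc ((List.ofFn fun i : Fin n => a i).toFinset ∪ [a n].toFinset).card
        ≤ (List.ofFn fun i : Fin n => a i).toFinset.card + [a n].toFinset.card :=
          Finset.card_union_le _ _
      _ ≤ D n + 1 := by simp [hD]
  have hnew : ∀ n, D (n + 1) ≠ D n → a n ∉ (List.ofFn fun i : Fin n => a i).toFinset := by
    intro n hne hmem
    apply hne
    rw [hD]
    simp only [hsuccList n, List.toFinset_append]
    congr 1
    simp only [List.toFinset_cons, List.toFinset_nil]
    rw [Finset.union_comm]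
    simpa using Finset.insert_eq_self.2 hmem
  -- D is unbounded
  have hunbdd : ∀ m, ∃ n, m ≤ D n := by
    intro m
    induction m with
    | zero => exact ⟨0, Nat.zero_le _⟩
    | succ m ih =>
      obtain ⟨n, hn⟩ := ih
      have hfin' : ({x | x ∈ (List.ofFn fun i : Fin n => a i)} : Set X).Finite :=
        (List.ofFn fun i : Fin n => a i).finite_toSet
      obtain ⟨x, hx⟩ := (hinfR.diff hfin').nonempty
      obtain ⟨⟨j, rfl⟩, hxn⟩ := hx
      refine ⟨max n j + 1, ?_⟩
      have h1 : insert (a j) (List.ofFn fun i : Fin n => a i).toFinset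
          ⊆ (List.ofFn fun i : Fin (max n j + 1) => a i).toFinset := by
        intro y hy
        rcases Finset.mem_insert.1 hy with rfl | hy
        · simp only [List.mem_toFinset, List.mem_ofFn, Set.mem_range]
          exact ⟨⟨j, Nat.lt_succ_of_le (le_max_right n j)⟩, rfl⟩
        · exact histmono (Nat.le_succ_of_le (le_max_left n j)) hy
      have h2 : (a j) ∉ (List.ofFn fun i : Fin n => a i).toFinset := by
        simpa [List.mem_toFinset] using hxn
      have hcard : D n = (List.ofFn fun i : Fin n => a i).toFinset.card := rfl
      calc m + 1 ≤ D n + 1 := by omega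
        _ = (insert (a j) (List.ofFn fun i : Fin n => a i).toFinset).card := by
          rw [Finset.card_insert_of_notMem h2, hcard]
        _ ≤ D (max n j + 1) := Finset.card_le_card h1
  -- for each v, the last round at which D equals v
  have hD0 : D 0 = 0 := by simp [hD]
  have kex : ∀ v : ℕ, ∃ k, D k = v ∧ D (k + 1) ≠ D k := by
    intro v
    have hex := hunbdd (v + 1)
    have hLge : v + 1 ≤ D (Nat.find hex) := Nat.find_spec hex
    have hLpos : Nat.find hex ≠ 0 := by
      intro h0
      rw [h0, hD0] at hLge
      omega
    obtain ⟨k, hLk⟩ := Nat.exists_eq_succ_of_ne_zero hLpos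
    have hklt : ¬ (v + 1 ≤ D k) := Nat.find_min hex (by omega)
    rw [hLk] at hLge
    have hLge' : v + 1 ≤ D (k + 1) := by simpa [Nat.succ_eq_add_one] using hLge
    have := hDsucc k
    refine ⟨k, by omega, by omega⟩
  choose k hk1 hk2 using kex
  -- the witnesses x v = a (k v) are distinct members of A n₀'s fiber
  have hkinj : ∀ v w, v < w → a (k v) ≠ a (k w) := by
    intro v w hvw heq
    have hkk : k v < k w := by
      by_contra hle
      push_neg at hle
      have := hDmono hle
      rw [hk1 v, hk1 w] at this
      omega
    have hmem1 : a (k v) ∈ (List.ofFn fun i : Fin (k w) => a i).toFinset := by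
      apply histmono hkk
      simp only [List.mem_toFinset, List.mem_ofFn, Set.mem_range]
      exact ⟨⟨k v, Nat.lt_succ_self _⟩, rfl⟩
    exact hnew (k w) (hk2 w) (heq ▸ hmem1)
  -- fiber of n₀ under unpair.1 is infinite; map it injectively into A n₀ ∩ range a
  have hFinf : {v : ℕ | (Nat.unpair v).1 = n₀}.Infinite := by
    apply Set.infinite_of_injective_forall_mem (f := fun j : ℕ => Nat.pair n₀ j)
    · intro i j hij
      have := congrArg (fun x => (Nat.unpair x).2) hij
      simpa [Nat.unpair_pair] using this
    · intro j
      simp [Nat.unpair_pair]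
  haveI := hFinf.to_subtype
  refine absurd (Set.infinite_of_injective_forall_mem
    (f := fun v : {v : ℕ | (Nat.unpair v).1 = n₀} => a (k v.1)) ?_ ?_) hfin.not_infinite
  · intro v w hvw
    rcases lt_trichotomy (v : ℕ) (w : ℕ) with h' | h' | h'
    · exact absurd hvw (hkinj _ _ h')
    · exact Subtype.ext h'
    · exact absurd hvw.symm (hkinj _ _ h')
  · rintro ⟨v, hv⟩
    constructor
    · have := haD (k v)
      rw [hk1 v, hv] at this
      exact this
    · exact ⟨k v, rfl⟩

/-- If ℬ is Γ-like and ℬ ⊆ 𝒜, Player I has no winning perfect-information strategy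
in G₁(𝒜,ℬ) iff α₂(𝒜,ℬ) holds. -/
theorem stmt11 {X : Type*} (𝒜 ℬ : Set (Set X))
    (hB : GammaLike ℬ) (hBA : ℬ ⊆ 𝒜) :
    ¬ WinG1 𝒜 ℬ ↔ Alpha2 𝒜 ℬ :=
  ⟨fun h => noWin_alpha2 𝒜 ℬ hB h, fun h => alpha2_noWin 𝒜 ℬ hB hBA h⟩
end

section
/- Let X be a set and let 𝒜, ℬ be collections of subsets of X with 𝒜 Γ-like. Then α₄(𝒜,ℬ) holds if and only if α_{4.1}(𝒜,ℬ) holds. -/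
open Set

/-! Choosing the `m`-th point in `S (Nat.unpair m).1` outside the finitely many points chosen
before gives an injective sequence, whose values split, along `Nat.pair n`, into pairwise
disjoint infinite subsets `D n ⊆ S n`. For Γ-like `𝒜` these `D n` lie in `𝒜`, and a `B`
meeting infinitely many `D n` meets infinitely many `A n`. -/

open Function

theorem exists_injective_forall_mem {X : Type*} {S : ℕ → Set X}
    (hS : ∀ n, (S n).Infinite) : ∃ f : ℕ → X, Injective f ∧ ∀ n, f n ∈ S n := by
  -- The index is recovered from the set of earlier values, which has exactly `n` elements.
  obtain ⟨f, hf⟩ := seq_of_forall_finite_exists fun t (ht : t.Finite) =>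
    ((hS t.ncard).sdiff ht).nonempty
  have hfresh : ∀ {i n}, i < n → f i ≠ f n := fun hin hfi =>
    (hf _).2 ⟨_, hin, hfi⟩
  have hinj : Injective f := fun i j hij => by
    rcases lt_trichotomy i j with h | h | h
    · exact absurd hij (hfresh h)
    · exact h
    · exact absurd hij.symm (hfresh h)
  refine ⟨f, hinj, fun n => ?_⟩
  simpa [ncard_image_of_injective _ hinj] using (hf n).1

theorem exists_pairwise_disjoint_infinite_subsets {X : Type*} {S : ℕ → Set X}
    (hS : ∀ n, (S n).Infinite) :
    ∃ D : ℕ → Set X, (∀ n, D n ⊆ S n) ∧ (∀ n, (D n).Infinite) ∧ Pairwise (Disjoint on D) := by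
  obtain ⟨f, hf, hfS⟩ := exists_injective_forall_mem fun m => hS (Nat.unpair m).1
  refine ⟨fun n => range fun k => f (Nat.pair n k), ?_, fun n => ?_, fun m n hmn => ?_⟩
  · rintro n _ ⟨k, rfl⟩
    simpa using hfS (Nat.pair n k)
  · exact infinite_range_of_injective fun k l hkl => by simpa using hf hkl
  · refine disjoint_left.2 ?_
    rintro _ ⟨k, rfl⟩ ⟨l, hl⟩
    exact hmn (Nat.pair_eq_pair.1 (hf hl)).1.symm

theorem Alpha4.alpha4p1 {X : Type*} {𝒜 ℬ : Set (Set X)} (h : Alpha4 𝒜 ℬ) : Alpha4p1 𝒜 ℬ :=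
  fun A hA _ => h A hA

theorem GammaLike.alpha4_of_alpha4p1 {X : Type*} {𝒜 ℬ : Set (Set X)} (h𝒜 : GammaLike 𝒜)
    (h : Alpha4p1 𝒜 ℬ) : Alpha4 𝒜 ℬ := by
  intro A hA
  obtain ⟨D, hDA, hDinf, hDdisj⟩ :=
    exists_pairwise_disjoint_infinite_subsets fun n => (h𝒜 _ (hA n)).1
  obtain ⟨B, hB, hBD⟩ :=
    h D (fun n => (h𝒜 _ (hA n)).2 _ (hDA n) (hDinf n)) fun m n hmn => hDdisj hmn
  exact ⟨B, hB, hBD.mono fun n hn => hn.mono (inter_subset_inter_left B (hDA n))⟩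

/-- If 𝒜 is Γ-like, then α₄(𝒜,ℬ) holds iff α_{4.1}(𝒜,ℬ) holds. -/
theorem stmt15 {X : Type*} (𝒜 ℬ : Set (Set X))
    (hA : GammaLike 𝒜) :
    Alpha4 𝒜 ℬ ↔ Alpha4p1 𝒜 ℬ :=
  ⟨Alpha4.alpha4p1, hA.alpha4_of_alpha4p1⟩
end

section
/- Let X be a set and let 𝒜, ℬ be collections of subsets of X such that 𝒜 is Γ-like, 𝒜 is closed under finite unions, and 𝒜 ⊆ ℬ. Then α₁(𝒜,ℬ) holds if and only if α_{1.1}(𝒜,ℬ) holds. -/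
open Set

/-!
Split the sequence into its disjointed pieces `Dₙ = Aₙ \ (A₀ ∪ ⋯ ∪ Aₙ₋₁)`; a set `B` almost
containing every `Dₙ` almost contains every `Aₙ`. If infinitely many `Dₙ` are infinite, those
pieces form a disjoint sequence in `𝒜` (Γ-likeness), and the `B` given by α_{1.1} almost contains
them while the remaining pieces are finite. Otherwise all `Dₙ` past some `N` are finite and
`B = A₀ ∪ ⋯ ∪ A_N ∈ 𝒜 ⊆ ℬ` works.
-/

open Function

lemma UnionClosed.partialSups_mem {X ι : Type*} [Preorder ι] [LocallyFiniteOrderBot ι]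
    {𝒜 : Set (Set X)} (hU : UnionClosed 𝒜) {A : ι → Set X} (hA : ∀ i, A i ∈ 𝒜) (i : ι) :
    partialSups A i ∈ 𝒜 :=
  Finset.sup'_induction Finset.nonempty_Iic A (fun _ hs _ ht => hU _ hs _ ht) fun j _ => hA j

lemma finite_sdiff_of_forall_finite_disjointed_sdiff {X ι : Type*} [PartialOrder ι]
    [LocallyFiniteOrderBot ι] {A : ι → Set X} {B : Set X}
    (h : ∀ i, (disjointed A i \ B).Finite) (i : ι) : (A i \ B).Finite := by
  have hsup : (partialSups (disjointed A) i \ B).Finite :=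
    (partialSups_iff_forall (fun s => (s \ B).Finite) (by simp [union_sdiff_distrib])).2
      fun j _ => h j
  rw [partialSups_disjointed] at hsup
  exact hsup.subset (sdiff_subset_sdiff_left (le_partialSups A i))

lemma exists_forall_finite_disjointed_sdiff_partialSups {X : Type*} {A : ℕ → Set X}
    (hfin : {n | (disjointed A n).Infinite}.Finite) :
    ∃ N, ∀ n, (disjointed A n \ partialSups A N).Finite := by
  obtain ⟨N, hN⟩ := hfin.bddAbove
  refine ⟨N, fun n => ?_⟩
  rcases le_or_gt n N with hle | hlt
  · rw [sdiff_eq_empty.2 ((disjointed_le A n).trans (le_partialSups_of_le A hle))]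
    exact finite_empty
  · exact (not_infinite.1 fun hn => hlt.not_ge (hN hn)).sdiff

lemma Alpha1p1.exists_forall_finite_sdiff {X : Type*} {𝒜 ℬ : Set (Set X)} (h : Alpha1p1 𝒜 ℬ)
    {E : ℕ → Set X} (hE : Pairwise (Disjoint on E)) (h𝒜 : ∀ n, (E n).Infinite → E n ∈ 𝒜)
    (hinf : {n | (E n).Infinite}.Infinite) : ∃ B ∈ ℬ, ∀ n, (E n \ B).Finite := by
  classical
  obtain ⟨B, hB, hfin⟩ := h (E ∘ Nat.nth fun n => (E n).Infinite)
    (fun k => h𝒜 _ (Nat.nth_mem_of_infinite hinf k))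
    fun _ _ hkl => hE ((Nat.nth_injective hinf).ne hkl)
  refine ⟨B, hB, fun n => ?_⟩
  by_cases hn : (E n).Infinite
  · have hcount := Nat.nth_count (p := fun n => (E n).Infinite) hn
    simpa only [comp_apply, hcount] using hfin (Nat.count (fun n => (E n).Infinite) n)
  · exact (not_infinite.1 hn).sdiff

/-- If 𝒜 is Γ-like, closed under finite unions, and 𝒜 ⊆ ℬ, then
α₁(𝒜,ℬ) holds iff α_{1.1}(𝒜,ℬ) holds. -/
theorem stmt16 {X : Type*} (𝒜 ℬ : Set (Set X))
    (hA : GammaLike 𝒜) (hU : UnionClosed 𝒜) (hAB : 𝒜 ⊆ ℬ) :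
    Alpha1 𝒜 ℬ ↔ Alpha1p1 𝒜 ℬ := by
  refine ⟨fun h A hA𝒜 _ => h A hA𝒜, fun h A hA𝒜 => ?_⟩
  suffices ∃ B ∈ ℬ, ∀ n, (disjointed A n \ B).Finite by
    obtain ⟨B, hB, hfin⟩ := this
    exact ⟨B, hB, finite_sdiff_of_forall_finite_disjointed_sdiff hfin⟩
  rcases Set.finite_or_infinite {n | (disjointed A n).Infinite} with hfin | hinf
  · obtain ⟨N, hN⟩ := exists_forall_finite_disjointed_sdiff_partialSups hfin
    exact ⟨partialSups A N, hAB (hU.partialSups_mem hA𝒜 N), hN⟩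
  · exact Alpha1p1.exists_forall_finite_sdiff h (disjoint_disjointed A)
      (fun n hn => (hA _ (hA𝒜 n)).2 _ (disjointed_le A n) hn) hinf
end
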